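/- arXiv:1912.00248 — 2 statements merged into one kernel-verified Lean document; each statement's English description precedes it below -/
import Mathlib

section
/- Let L > 0 and let ω₀ be a nonempty open subset of the interval (0, L) whose closure is contained in (0, L). Then there exists a function η₀ : ℝ → ℝ that is twice continuously differentiable on [0, L], satisfies η₀(x) > 0 for every x ∈ (0, L), η₀(0) = η₀(L) = 0, and whose derivative satisfies |η₀′(x)| > 0 for every x ∈ [0, L] \ ω₀. -/
open Set

/-- Fursikov's lemma in dimension 1: existence of a weight function on `[0, L]`
whose critical points all lie in the prescribed open set `ω₀`. -/
theorem fursikov_weight_one_dim (L : ℝ) (hL : 0 < L) (ω₀ : Set ℝ)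
    (hopen : IsOpen ω₀) (hne : ω₀.Nonempty) (hsub : closure ω₀ ⊆ Ioo 0 L) :
    ∃ η₀ : ℝ → ℝ, ContDiffOn ℝ 2 η₀ (Icc 0 L) ∧
      (∀ x ∈ Ioo 0 L, 0 < η₀ x) ∧ η₀ 0 = 0 ∧ η₀ L = 0 ∧
      ∀ x ∈ Icc 0 L \ ω₀, 0 < |deriv η₀ x| := by
  obtain ⟨c, hc⟩ := hne
  obtain ⟨hc0, hcL⟩ : c ∈ Ioo 0 L := hsub (subset_closure hc)
  have hLc : 0 < L - c := by linarith
  set s : ℝ := c / (L - c) with hs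
  have hs0 : 0 < s := div_pos hc0 hLc
  have hsLc : s * (L - c) = c := by rw [hs]; field_simp
  clear_value s
  set d : ℝ → ℝ := fun x => x + s * (L - x) with hd
  clear_value d
  have hdpos : ∀ x ∈ Icc (0:ℝ) L, 0 < d x := by
    rintro x ⟨h1, h2⟩
    rcases eq_or_lt_of_le h1 with h | h
    · rw [← h]
      have hd0 : d 0 = s * L := by simp [hd]
      rw [hd0]; positivity
    · have h3 : 0 ≤ s * (L - x) := mul_nonneg hs0.le (by linarith)
      have hdx : d x = x + s * (L - x) := by rw [hd]
      rw [hdx]; linarith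
  set φ : ℝ → ℝ := fun x => x / d x with hφdef
  set η : ℝ → ℝ := fun x => Real.sin (Real.pi * φ x) with hη
  have hφ01 : ∀ x ∈ Icc (0:ℝ) L, 0 ≤ φ x ∧ φ x ≤ 1 := by
    rintro x hx
    have hdx := hdpos x hx
    constructor
    · exact div_nonneg hx.1 hdx.le
    · rw [hφdef, div_le_one hdx]
      have : 0 ≤ s * (L - x) := mul_nonneg hs0.le (by linarith [hx.2])
      have hdx2 : d x = x + s * (L - x) := by rw [hd]
      rw [hdx2]; linarith
  have hcd : ContDiff ℝ 2 d := by rw [hd]; fun_prop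
  have hφc : ContDiffOn ℝ 2 φ (Icc 0 L) :=
    ContDiffOn.div contDiffOn_id hcd.contDiffOn (fun x hx => (hdpos x hx).ne')
  have hdd : ∀ x : ℝ, HasDerivAt d (1 - s) x := by
    intro x
    rw [hd]
    have h1 : HasDerivAt (fun x : ℝ => x) 1 x := hasDerivAt_id x
    have h2 : HasDerivAt (fun x : ℝ => s * (L - x)) (s * (0 - 1)) x :=
      (((hasDerivAt_const x L).sub (hasDerivAt_id x)).const_mul s)
    have h3 := h1.add h2
    have : 1 + s * (0 - 1) = 1 - s := by ring
    rw [this] at h3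
    exact h3
  have hφd : ∀ x ∈ Icc (0:ℝ) L, HasDerivAt φ (s * L / (d x) ^ 2) x := by
    intro x hx
    have hdx := hdpos x hx
    have h := (hasDerivAt_id x).div (hdd x) hdx.ne'
    have hnum : (1 * d x - id x * (1 - s)) / d x ^ 2 = s * L / (d x) ^ 2 := by
      have hdx2 : d x = x + s * (L - x) := by rw [hd]
      rw [hdx2]; simp only [id]; ring
    rw [hnum] at h
    exact h
  have hηd : ∀ x ∈ Icc (0:ℝ) L,
      HasDerivAt η (Real.cos (Real.pi * φ x) * (Real.pi * (s * L / (d x) ^ 2))) x := by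
    intro x hx
    exact (Real.hasDerivAt_sin (Real.pi * φ x)).comp x ((hφd x hx).const_mul Real.pi)
  refine ⟨η, ?_, ?_, ?_, ?_, ?_⟩
  · exact Real.contDiff_sin.comp_contDiffOn (contDiffOn_const.mul hφc)
  · rintro x ⟨h1, h2⟩
    have hdx := hdpos x ⟨h1.le, h2.le⟩
    have hφpos : 0 < φ x := div_pos h1 hdx
    have hφlt : φ x < 1 := by
      rw [hφdef, div_lt_one hdx]
      have : 0 < s * (L - x) := mul_pos hs0 (by linarith)
      have hdx2 : d x = x + s * (L - x) := by rw [hd]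
      rw [hdx2]; linarith
    exact Real.sin_pos_of_pos_of_lt_pi (by positivity)
      (by nlinarith [Real.pi_pos])
  · have : φ 0 = 0 := by simp [hφdef]
    simp [hη, this]
  · have hdL : d L = L := by simp [hd]
    have : φ L = 1 := by rw [hφdef]; simp only [hdL]; field_simp
    simp [hη, this]
  · rintro x ⟨hx, hxω⟩
    have hxc : x ≠ c := fun h => hxω (h ▸ hc)
    have hdx := hdpos x hx
    have hder := (hηd x hx)
    rw [hder.deriv, abs_pos]
    have hfac : Real.pi * (s * L / (d x) ^ 2) ≠ 0 := by positivity
    refine mul_ne_zero ?_ hfac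
    intro hcos
    obtain ⟨h0, h1⟩ := hφ01 x hx
    have hmem : Real.pi * φ x ∈ Icc 0 Real.pi := by
      constructor
      · positivity
      · nlinarith [Real.pi_pos]
    have hmem2 : Real.pi / 2 ∈ Icc 0 Real.pi := by
      constructor <;> nlinarith [Real.pi_pos]
    have hhalf : Real.pi * φ x = Real.pi / 2 :=
      Real.injOn_cos hmem hmem2 (by rw [hcos, Real.cos_pi_div_two])
    have hhalf' : Real.pi * φ x = Real.pi * (1 / 2) := by rw [hhalf]; ring
    have hφhalf : φ x = 1 / 2 := mul_left_cancel₀ Real.pi_ne_zero hhalf'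
    have hx2 : x / d x = 1 / 2 := hφhalf
    have h2x : 2 * x = d x := by
      field_simp at hx2; linarith
    have hdx2 : d x = x + s * (L - x) := by rw [hd]
    rw [hdx2] at h2x
    have hzero : (x - c) * (1 + s) = 0 := by linear_combination h2x + hsLc
    rcases mul_eq_zero.1 hzero with h | h
    · exact hxc (by linarith)
    · linarith
end

section
/- Let T > 0, λ > 0, M > 0 and s > 0 be real numbers. Then each of the functions ρ₂, ρ₃, ρ₄, ρ₅ is differentiable on (0, T), and there exists a constant C > 0 such that for all t ∈ (0, T): |ρ₂(t)·ρ₂′(t)| ≤ C·ρ₁(t)², |ρ₃(t)·ρ₃′(t)| ≤ C·ρ₂(t)², |ρ₄(t)·ρ₄′(t)| ≤ C·ρ₃(t)², and |ρ₅(t)·ρ₅′(t)| ≤ C·ρ₄(t)². -/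
open Set Filter

/-- The time weight: `l t = T²/4` for `t ≤ T/2` and `l t = t (T − t)` for `t ≥ T/2`. -/
noncomputable def lfun (T t : ℝ) : ℝ := if t ≤ T / 2 then T ^ 2 / 4 else t * (T - t)

/-- `ξ*(t) = e^{3λM} / l(t)`. -/
noncomputable def xiStar (T lam M t : ℝ) : ℝ := Real.exp (3 * lam * M) / lfun T t

/-- `β*(t) = (2/5)(e^{4λM} − e^{2λM}) / l(t)`. -/
noncomputable def betaStar (T lam M t : ℝ) : ℝ :=
  2 / 5 * (Real.exp (4 * lam * M) - Real.exp (2 * lam * M)) / lfun T t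

/-- `ρ(t) = e^{(5/2) s β*(t)} ξ*(t)^{3/2}`. -/
noncomputable def rho (T lam M s t : ℝ) : ℝ :=
  Real.exp (5 / 2 * s * betaStar T lam M t) * xiStar T lam M t ^ ((3 : ℝ) / 2)

/-- `ρ₀(t) = e^{2 s β*(t)}`. -/
noncomputable def rho0 (T lam M s t : ℝ) : ℝ := Real.exp (2 * s * betaStar T lam M t)

/-- `ρ₁(t) = e^{2 s β*(t)} ξ*(t)^{−2}`. -/
noncomputable def rho1 (T lam M s t : ℝ) : ℝ :=
  Real.exp (2 * s * betaStar T lam M t) * xiStar T lam M t ^ (-2 : ℝ)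

/-- `ρ₂(t) = e^{(3/2) s β*(t)} ξ*(t)^{−3}`. -/
noncomputable def rho2 (T lam M s t : ℝ) : ℝ :=
  Real.exp (3 / 2 * s * betaStar T lam M t) * xiStar T lam M t ^ (-3 : ℝ)

/-- `ρ₃(t) = e^{(3/2) s β*(t)} ξ*(t)^{−8}`. -/
noncomputable def rho3 (T lam M s t : ℝ) : ℝ :=
  Real.exp (3 / 2 * s * betaStar T lam M t) * xiStar T lam M t ^ (-8 : ℝ)

/-- `ρ₄(t) = e^{(3/2) s β*(t)} ξ*(t)^{−9}`. -/
noncomputable def rho4 (T lam M s t : ℝ) : ℝ :=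
  Real.exp (3 / 2 * s * betaStar T lam M t) * xiStar T lam M t ^ (-9 : ℝ)

/-- `ρ₅(t) = e^{(3/2) s β*(t)} ξ*(t)^{−10}`. -/
noncomputable def rho5 (T lam M s t : ℝ) : ℝ :=
  Real.exp (3 / 2 * s * betaStar T lam M t) * xiStar T lam M t ^ (-10 : ℝ)

lemma lfun_pos {T t : ℝ} (hT : 0 < T) (ht : t ∈ Ioo (0 : ℝ) T) : 0 < lfun T t := by
  obtain ⟨ht0, htT⟩ := ht
  unfold lfun
  split_ifs with h
  · positivity
  · exact mul_pos ht0 (by linarith)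

lemma lfun_le (T t : ℝ) : lfun T t ≤ T ^ 2 / 4 := by
  unfold lfun
  split_ifs with h
  · exact le_refl _
  · nlinarith [sq_nonneg (t - T / 2)]

lemma lfun_hasDeriv {T t : ℝ} (hT : 0 < T) (ht : t ∈ Ioo (0 : ℝ) T) :
    ∃ L', HasDerivAt (lfun T) L' t ∧ |L'| ≤ T := by
  obtain ⟨ht0, htT⟩ := ht
  rcases lt_trichotomy t (T / 2) with hlt | heq | hgt
  · refine ⟨0, ?_, by simpa using hT.le⟩
    refine (hasDerivAt_const t (T ^ 2 / 4)).congr_of_eventuallyEq ?_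
    filter_upwards [Iio_mem_nhds hlt] with u hu
    unfold lfun
    rw [if_pos (le_of_lt hu)]
  · subst heq
    refine ⟨0, ?_, by simpa using hT.le⟩
    rw [hasDerivAt_iff_tendsto]
    have heq : ∀ u : ℝ, lfun T u - lfun T (T / 2) = -(max (u - T / 2) 0) ^ 2 := by
      intro u
      unfold lfun
      rcases le_or_gt u (T / 2) with h | h
      · rw [if_pos h, if_pos le_rfl, max_eq_right (by linarith)]; ring
      · rw [if_neg (not_le.2 h), if_pos le_rfl, max_eq_left (by linarith)]; ring
    apply squeeze_zero (g := fun u => |u - T / 2|)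
    · intro u; positivity
    · intro u
      rw [smul_zero, sub_zero, Real.norm_eq_abs, Real.norm_eq_abs, heq u]
      have h0 : 0 ≤ max (u - T / 2) 0 := le_max_right _ _
      have h1 : max (u - T / 2) 0 ≤ |u - T / 2| := max_le (le_abs_self _) (abs_nonneg _)
      rcases eq_or_ne u (T / 2) with rfl | hne
      · simp
      · have hx : 0 < |u - T / 2| := abs_pos.2 (sub_ne_zero.2 hne)
        rw [abs_neg, abs_of_nonneg (by positivity : (0:ℝ) ≤ max (u - T / 2) 0 ^ 2)]
        calc |u - T / 2|⁻¹ * max (u - T / 2) 0 ^ 2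
            ≤ |u - T / 2|⁻¹ * |u - T / 2| ^ 2 := by
              have := pow_le_pow_left₀ h0 h1 2
              exact mul_le_mul_of_nonneg_left this (by positivity)
          _ = |u - T / 2| := by
              rw [sq, ← mul_assoc, inv_mul_cancel₀ hx.ne', one_mul]
    · have : Tendsto (fun u : ℝ => |u - T / 2|) (nhds (T / 2)) (nhds (|T / 2 - T / 2|)) :=
        (continuous_abs.comp (continuous_id.sub continuous_const)).tendsto _
      simpa using this
  · refine ⟨T - 2 * t, ?_, ?_⟩
    · have hd : HasDerivAt (fun u : ℝ => u * (T - u)) (1 * (T - t) + t * (0 - 1)) t :=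
        (hasDerivAt_id t).mul ((hasDerivAt_const t T).sub (hasDerivAt_id t))
      have hd2 : HasDerivAt (fun u : ℝ => u * (T - u)) (T - 2 * t) t := by
        convert hd using 1; ring
      refine hd2.congr_of_eventuallyEq ?_
      filter_upwards [Ioi_mem_nhds hgt] with u hu
      unfold lfun
      rw [if_neg (not_le.2 hu)]
    · rw [abs_le]; constructor <;> linarith

lemma rpow_neg_nat {x y : ℝ} (hx : 0 < x) (hy : 0 < y) (k : ℕ) :
    (x / y) ^ (-(k : ℝ)) = y ^ k / x ^ k := by
  rw [Real.rpow_neg (by positivity), Real.rpow_natCast, div_pow, inv_div]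

lemma master (T lam M s : ℝ) (hT : 0 < T) (hlam : 0 < lam) (hM : 0 < M) (hs : 0 < s)
    (j k : ℕ) (hjk : j + 1 ≤ k) :
    ∃ C > 0, ∀ t ∈ Ioo (0 : ℝ) T,
      DifferentiableAt ℝ
        (fun u => Real.exp (3 / 2 * s * betaStar T lam M u) * xiStar T lam M u ^ (-(k : ℝ))) t ∧
      |Real.exp (3 / 2 * s * betaStar T lam M t) * xiStar T lam M t ^ (-(k : ℝ)) *
          deriv (fun u => Real.exp (3 / 2 * s * betaStar T lam M u) *
            xiStar T lam M u ^ (-(k : ℝ))) t| ≤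
        C * (Real.exp (3 / 2 * s * betaStar T lam M t) * xiStar T lam M t ^ (-(j : ℝ))) ^ 2 := by
  obtain ⟨d, rfl⟩ : ∃ d, k = j + d + 1 := ⟨k - (j + 1), by omega⟩
  set A := Real.exp (3 * lam * M) with hAdef
  set B := 2 / 5 * (Real.exp (4 * lam * M) - Real.exp (2 * lam * M)) with hBdef
  have hA : 0 < A := Real.exp_pos _
  have hB : 0 < B := by
    have h1 : Real.exp (2 * lam * M) < Real.exp (4 * lam * M) :=
      Real.exp_lt_exp.2 (by nlinarith)
    rw [hBdef]
    have := sub_pos.2 h1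
    positivity
  have hbeta : ∀ u, betaStar T lam M u = B / lfun T u := fun u => by rw [hBdef]; rfl
  have hxi : ∀ u, xiStar T lam M u = A / lfun T u := fun u => by rw [hAdef]; rfl
  refine ⟨T * ((j + d + 1 : ℕ) * (T ^ 2 / 4) + 3 / 2 * s * B) * (T ^ 2 / 4) ^ (2 * d) /
      A ^ (2 * (d + 1)), by positivity, fun t ht => ?_⟩
  obtain ⟨ht0, htT⟩ := ht
  have hL : 0 < lfun T t := lfun_pos hT ⟨ht0, htT⟩
  have hLle : lfun T t ≤ T ^ 2 / 4 := lfun_le T t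
  obtain ⟨L', hL', habs⟩ := lfun_hasDeriv hT ⟨ht0, htT⟩
  have hEq : (fun u => Real.exp (3 / 2 * s * betaStar T lam M u) *
      xiStar T lam M u ^ (-((j + d + 1 : ℕ) : ℝ))) =ᶠ[nhds t]
      (fun u => Real.exp (3 / 2 * s * (B / lfun T u)) *
        (lfun T u ^ (j + d + 1) / A ^ (j + d + 1))) := by
    filter_upwards [Ioo_mem_nhds ht0 htT] with u hu
    rw [hbeta, hxi, rpow_neg_nat hA (lfun_pos hT hu)]
  have h1 : HasDerivAt (fun u => B / lfun T u)
      ((0 * lfun T t - B * L') / lfun T t ^ 2) t :=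
    (hasDerivAt_const t B).div hL' hL.ne'
  have h2 : HasDerivAt (fun u => 3 / 2 * s * (B / lfun T u))
      (3 / 2 * s * ((0 * lfun T t - B * L') / lfun T t ^ 2)) t := h1.const_mul _
  have h3 := h2.exp
  have h4 : HasDerivAt (fun u => lfun T u ^ (j + d + 1) / A ^ (j + d + 1))
      (((j + d + 1 : ℕ) : ℝ) * lfun T t ^ (j + d + 1 - 1) * L' / A ^ (j + d + 1)) t :=
    (hL'.pow _).div_const _
  have h5 := h3.mul h4
  constructor
  · exact h5.differentiableAt.congr_of_eventuallyEq hEq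
  · have hdeq := hEq.deriv_eq
    rw [hdeq, HasDerivAt.deriv (f := fun u => Real.exp (3 / 2 * s * (B / lfun T u)) * (lfun T u ^ (j + d + 1) / A ^ (j + d + 1))) h5]
    simp only [hbeta, hxi]
    rw [rpow_neg_nat hA hL (j + d + 1), rpow_neg_nat hA hL j]
    set E := Real.exp (3 / 2 * s * (B / lfun T t)) with hEdef
    have hE : 0 < E := Real.exp_pos _
    set L := lfun T t with hLdef
    have hsub : j + d + 1 - 1 = j + d := by omega
    rw [hsub]
    have hFF : E * (L ^ (j + d + 1) / A ^ (j + d + 1)) *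
        (E * (3 / 2 * s * ((0 * L - B * L') / L ^ 2)) * (L ^ (j + d + 1) / A ^ (j + d + 1)) +
          E * (((j + d + 1 : ℕ) : ℝ) * L ^ (j + d) * L' / A ^ (j + d + 1))) =
        E ^ 2 * L ^ (2 * (j + d)) * (L' * (((j + d + 1 : ℕ) : ℝ) * L - 3 / 2 * s * B)) /
          A ^ (2 * (j + d + 1)) := by
      field_simp
      ring
    rw [hFF]
    have habs2 : |E ^ 2 * L ^ (2 * (j + d)) * (L' * (((j + d + 1 : ℕ) : ℝ) * L - 3 / 2 * s * B)) /
        A ^ (2 * (j + d + 1))| ≤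
        E ^ 2 * L ^ (2 * (j + d)) * (T * (((j + d + 1 : ℕ) : ℝ) * L + 3 / 2 * s * B)) /
          A ^ (2 * (j + d + 1)) := by
      rw [abs_div, abs_mul, abs_mul]
      have e1 : |E ^ 2| = E ^ 2 := abs_of_pos (by positivity)
      have e2 : |L ^ (2 * (j + d))| = L ^ (2 * (j + d)) := abs_of_pos (by positivity)
      have e3 : |A ^ (2 * (j + d + 1))| = A ^ (2 * (j + d + 1)) := abs_of_pos (by positivity)
      rw [e1, e2, e3]
      have key : |L' * (((j + d + 1 : ℕ) : ℝ) * L - 3 / 2 * s * B)| ≤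
          T * (((j + d + 1 : ℕ) : ℝ) * L + 3 / 2 * s * B) := by
        rw [abs_mul]
        have hb1 : |((j + d + 1 : ℕ) : ℝ) * L - 3 / 2 * s * B| ≤
            ((j + d + 1 : ℕ) : ℝ) * L + 3 / 2 * s * B := by
          have hX : (0:ℝ) ≤ ((j + d + 1 : ℕ) : ℝ) * L :=
            mul_nonneg (Nat.cast_nonneg _) hL.le
          have hY : (0:ℝ) ≤ 3 / 2 * s * B := by positivity
          rw [abs_le]
          constructor <;> linarith
        exact mul_le_mul habs hb1 (abs_nonneg _) hT.le
      gcongr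
    refine habs2.trans ?_
    have hexpand : T * ((j + d + 1 : ℕ) * (T ^ 2 / 4) + 3 / 2 * s * B) * (T ^ 2 / 4) ^ (2 * d) /
        A ^ (2 * (d + 1)) * (E * (L ^ j / A ^ j)) ^ 2 =
        E ^ 2 * (L ^ (2 * j) * (T ^ 2 / 4) ^ (2 * d)) *
          (T * (((j + d + 1 : ℕ) : ℝ) * (T ^ 2 / 4) + 3 / 2 * s * B)) /
          A ^ (2 * (j + d + 1)) := by
      have hApow : A ^ (2 * (j + d + 1)) = A ^ (2 * (d + 1)) * A ^ (2 * j) := by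
        rw [← pow_add]; ring_nf
      rw [hApow]
      field_simp
      ring
    rw [hexpand]
    have hLpow : L ^ (2 * (j + d)) = L ^ (2 * j) * L ^ (2 * d) := by
      rw [← pow_add]; ring_nf
    rw [hLpow]
    gcongr

/-- `ρ₂, ρ₃, ρ₄, ρ₅` are differentiable on `(0, T)` and satisfy
`|ρᵢ ρᵢ′| ≤ C ρᵢ₋₁²` there, for `i = 2, 3, 4, 5`. -/
theorem weights_derivative_estimate (T lam M s : ℝ) (hT : 0 < T) (hlam : 0 < lam)
    (hM : 0 < M) (hs : 0 < s) :
    (∀ t ∈ Ioo (0 : ℝ) T,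
      DifferentiableAt ℝ (rho2 T lam M s) t ∧ DifferentiableAt ℝ (rho3 T lam M s) t ∧
      DifferentiableAt ℝ (rho4 T lam M s) t ∧ DifferentiableAt ℝ (rho5 T lam M s) t) ∧
    ∃ C > 0, ∀ t ∈ Ioo (0 : ℝ) T,
      |rho2 T lam M s t * deriv (rho2 T lam M s) t| ≤ C * rho1 T lam M s t ^ 2 ∧
      |rho3 T lam M s t * deriv (rho3 T lam M s) t| ≤ C * rho2 T lam M s t ^ 2 ∧
      |rho4 T lam M s t * deriv (rho4 T lam M s) t| ≤ C * rho3 T lam M s t ^ 2 ∧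
      |rho5 T lam M s t * deriv (rho5 T lam M s) t| ≤ C * rho4 T lam M s t ^ 2 := by
  obtain ⟨C2, hC2, h2⟩ := master T lam M s hT hlam hM hs 2 3 (by norm_num)
  obtain ⟨C3, hC3, h3⟩ := master T lam M s hT hlam hM hs 3 8 (by norm_num)
  obtain ⟨C4, hC4, h4⟩ := master T lam M s hT hlam hM hs 8 9 (by norm_num)
  obtain ⟨C5, hC5, h5⟩ := master T lam M s hT hlam hM hs 9 10 (by norm_num)
  simp only [Nat.cast_ofNat] at h2 h3 h4 h5
  constructor
  · intro t ht
    exact ⟨(h2 t ht).1, (h3 t ht).1, (h4 t ht).1, (h5 t ht).1⟩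
  · refine ⟨C2 + C3 + C4 + C5, by positivity, fun t ht => ?_⟩
    have hx2 := (h2 t ht).2
    have hx3 := (h3 t ht).2
    have hx4 := (h4 t ht).2
    have hx5 := (h5 t ht).2
    have hLpos : 0 < lfun T t := lfun_pos hT ht
    have hbpos : 0 ≤ betaStar T lam M t := by
      unfold betaStar
      have : Real.exp (2 * lam * M) ≤ Real.exp (4 * lam * M) :=
        Real.exp_le_exp.2 (by nlinarith)
      have h := sub_nonneg.2 this
      positivity
    have hxipos : 0 < xiStar T lam M t := div_pos (Real.exp_pos _) hLpos
    have hr1 : (Real.exp (3 / 2 * s * betaStar T lam M t) * xiStar T lam M t ^ (-2 : ℝ)) ^ 2 ≤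
        rho1 T lam M s t ^ 2 := by
      have he : Real.exp (3 / 2 * s * betaStar T lam M t) ≤
          Real.exp (2 * s * betaStar T lam M t) := Real.exp_le_exp.2 (by nlinarith)
      have hxn : (0 : ℝ) ≤ xiStar T lam M t ^ (-2 : ℝ) := Real.rpow_nonneg hxipos.le _
      have hmul : Real.exp (3 / 2 * s * betaStar T lam M t) * xiStar T lam M t ^ (-2 : ℝ) ≤
          rho1 T lam M s t := mul_le_mul_of_nonneg_right he hxn
      exact pow_le_pow_left₀ (mul_nonneg (Real.exp_pos _).le hxn) hmul 2
    have hsum : ∀ Ci X : ℝ, Ci = C2 ∨ Ci = C3 ∨ Ci = C4 ∨ Ci = C5 → 0 ≤ X →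
        Ci * X ≤ (C2 + C3 + C4 + C5) * X := by
      intro Ci X hCi hX
      rcases hCi with rfl | rfl | rfl | rfl <;> nlinarith
    refine ⟨?_, ?_, ?_, ?_⟩
    · refine hx2.trans ?_
      refine (mul_le_mul_of_nonneg_left hr1 hC2.le).trans ?_
      exact hsum C2 _ (Or.inl rfl) (sq_nonneg _)
    · exact hx3.trans (hsum C3 _ (Or.inr (Or.inl rfl)) (sq_nonneg _))
    · exact hx4.trans (hsum C4 _ (Or.inr (Or.inr (Or.inl rfl))) (sq_nonneg _))
    · exact hx5.trans (hsum C5 _ (Or.inr (Or.inr (Or.inr rfl))) (sq_nonneg _))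
end
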